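/- arXiv:1307.3586 — 5 statements merged into one kernel-verified Lean document; each statement's English description precedes it below -/
import Mathlib

section
/- Every 2×2 doubly nonnegative matrix whose entries sum to one can be written as a finite convex combination ∑ᵢ λᵢ wᵢ wᵢᵀ of outer products of probability vectors wᵢ ∈ ℝ². -/
/-!
A 2×2 positive semidefinite matrix with nonnegative off-diagonal entry has a lower-triangular
Cholesky factor `B` with nonnegative entries, so `W = B Bᵀ` is a sum of outer products of the
nonnegative columns of `B`. Rescaling each column to a probability vector turns this into a
combination of outer products of probability vectors whose weights are the squared column sums;
these weights add up to the sum of the entries of `W`, which is `1`.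
-/

def IsProbVec {m : ℕ} (w : Fin m → ℝ) : Prop :=
  (∀ i, 0 ≤ w i) ∧ ∑ i, w i = 1

def IsCondIID {m : ℕ} (W : Matrix (Fin m) (Fin m) ℝ) : Prop :=
  ∃ (k : ℕ) (lam : Fin k → ℝ) (w : Fin k → Fin m → ℝ),
    (∀ i, 0 ≤ lam i) ∧ (∑ i, lam i = 1) ∧ (∀ i, IsProbVec (w i)) ∧
      ∀ a b, W a b = ∑ i, lam i * (w i a * w i b)

open Matrix Finset

theorem exists_isProbVec_smul_eq {m : ℕ} [Nonempty (Fin m)] {v : Fin m → ℝ} (hv : 0 ≤ v) :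
    ∃ w, IsProbVec w ∧ v = (∑ a, v a) • w := by
  by_cases hs : ∑ a, v a = 0
  · have hv0 : v = 0 := (Fintype.sum_eq_zero_iff_of_nonneg hv).1 hs
    obtain ⟨a₀⟩ := ‹Nonempty (Fin m)›
    refine ⟨Pi.single a₀ 1, ⟨fun a => ?_, by simp⟩, by simp [hv0]⟩
    by_cases h : a = a₀ <;> simp [h]
  · refine ⟨(∑ a, v a)⁻¹ • v, ⟨fun a => ?_, ?_⟩, by rw [smul_smul, mul_inv_cancel₀ hs, one_smul]⟩
    · exact smul_nonneg (inv_nonneg.2 (Fintype.sum_nonneg hv)) (hv a)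
    · simp [← mul_sum, inv_mul_cancel₀ hs]

theorem isCondIID_of_eq_mul_transpose {m k : ℕ} {W : Matrix (Fin m) (Fin m) ℝ}
    (B : Matrix (Fin m) (Fin k) ℝ) (hB : ∀ a i, 0 ≤ B a i) (hW : W = B * Bᵀ)
    (hsum : ∑ a, ∑ b, W a b = 1) : IsCondIID W := by
  have : Nonempty (Fin m) := by
    by_contra h
    simp [not_nonempty_iff.1 h] at hsum
  choose w hw hBw using fun i => exists_isProbVec_smul_eq (v := fun a => B a i) (fun a => hB a i)
  set s : Fin k → ℝ := fun i => ∑ a, B a i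
  have hentry : ∀ a b, W a b = ∑ i, s i ^ 2 * (w i a * w i b) := fun a b => by
    rw [hW, mul_apply]
    refine sum_congr rfl fun i _ => ?_
    rw [transpose_apply, congrFun (hBw i) a, congrFun (hBw i) b]
    simp only [Pi.smul_apply, smul_eq_mul, s]
    ring
  refine ⟨k, fun i => s i ^ 2, w, fun i => sq_nonneg _, ?_, hw, hentry⟩
  calc ∑ i, s i ^ 2 = ∑ i, ∑ a, ∑ b, s i ^ 2 * (w i a * w i b) := by
        simp [← mul_sum, (hw _).2]
    _ = ∑ a, ∑ b, W a b := by
      simp_rw [hentry]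
      rw [sum_comm]
      exact sum_congr rfl fun _ _ => sum_comm
    _ = 1 := hsum

/-- At `W 0 0 = 0` the junk values `x / 0 = 0` make this the factor `!![0, 0; 0, √(W 1 1)]`,
which is correct because positive semidefiniteness then forces `W 1 0 = 0`. -/
noncomputable def choleskyFinTwo (W : Matrix (Fin 2) (Fin 2) ℝ) : Matrix (Fin 2) (Fin 2) ℝ :=
  !![√(W 0 0), 0; W 1 0 / √(W 0 0), √(W 1 1 - W 1 0 ^ 2 / W 0 0)]

theorem choleskyFinTwo_nonneg {W : Matrix (Fin 2) (Fin 2) ℝ} (h : 0 ≤ W 1 0) (i j : Fin 2) :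
    0 ≤ choleskyFinTwo W i j := by
  fin_cases i <;> fin_cases j <;> simp [choleskyFinTwo, div_nonneg, h]

theorem choleskyFinTwo_mul_transpose {W : Matrix (Fin 2) (Fin 2) ℝ} (hW : W.PosSemidef) :
    choleskyFinTwo W * (choleskyFinTwo W)ᵀ = W := by
  unfold choleskyFinTwo
  set a := W 0 0
  set b := W 1 0
  set c := W 1 1
  have ha : 0 ≤ a := hW.diag_nonneg
  have hc : 0 ≤ c := hW.diag_nonneg
  have hsymm : W 0 1 = b := by simpa using (hW.1.apply 0 1).symm
  have hdet : b ^ 2 ≤ a * c := by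
    have := hW.det_nonneg
    rw [det_fin_two, hsymm] at this
    nlinarith
  have hschur : 0 ≤ c - b ^ 2 / a := by
    rcases ha.eq_or_lt with ha0 | ha0
    · simpa [← ha0] using hc
    · rw [sub_nonneg, div_le_iff₀ ha0]; linarith
  have hoff : √a * (b / √a) = b := by
    rcases ha.eq_or_lt with ha0 | ha0
    · have : b = 0 := by nlinarith [sq_nonneg b]
      simp [← ha0, this]
    · field_simp [(Real.sqrt_pos.2 ha0).ne']
  ext i j
  fin_cases i <;> fin_cases j <;> simp [mul_apply, Fin.sum_univ_two]
  · exact Real.mul_self_sqrt ha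
  · rw [hsymm, hoff]
  · rw [mul_comm, hoff]
  · rw [Real.mul_self_sqrt hschur, div_mul_div_comm, Real.mul_self_sqrt ha]
    ring

theorem stmt3_general (W : Matrix (Fin 2) (Fin 2) ℝ)
    (hnonneg : ∀ a b, 0 ≤ W a b) (hpsd : W.PosSemidef)
    (hsum : ∑ a, ∑ b, W a b = 1) :
    IsCondIID W :=
  isCondIID_of_eq_mul_transpose (choleskyFinTwo W) (choleskyFinTwo_nonneg (hnonneg 1 0))
    (choleskyFinTwo_mul_transpose hpsd).symm hsum

theorem stmt3 (W : Matrix (Fin 2) (Fin 2) ℝ)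
    (hsymm : W.IsSymm) (hnonneg : ∀ a b, 0 ≤ W a b) (hpsd : W.PosSemidef)
    (hsum : ∑ a, ∑ b, W a b = 1) :
    IsCondIID W :=
  stmt3_general W hnonneg hpsd hsum
end

section
/- Let x, y ∈ ℝ^m be two distinct probability vectors. Then the symmetric matrix W = (1/2)(x yᵀ + y xᵀ) is not positive semidefinite; in particular there exists z ∈ ℝ^m with zᵀWz < 0. -/
open Matrix

theorem Matrix.dotProduct_mulVec_eq_sum_sum {n R : Type*} [Fintype n] [CommSemiring R]
    (A : Matrix n n R) (v w : n → R) :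
    v ⬝ᵥ A *ᵥ w = ∑ i, ∑ j, v i * A i j * w j := by
  simp only [dotProduct, mulVec, Finset.mul_sum, mul_assoc]

theorem dotProduct_mulVec_eq_mul_of_symmetrized_outer {ι K : Type*} [Fintype ι] [Field K]
    [NeZero (2 : K)] {x y : ι → K} {W : Matrix ι ι K}
    (hW : ∀ a b, W a b = (x a * y b + y a * x b) / 2) (z : ι → K) :
    z ⬝ᵥ W *ᵥ z = (z ⬝ᵥ x) * (z ⬝ᵥ y) := by
  have hsymm : ∑ a, ∑ b, z a * y a * (z b * x b) = ∑ a, ∑ b, z a * x a * (z b * y b) := by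
    rw [Finset.sum_comm]; simp only [mul_comm]
  rw [dotProduct_mulVec_eq_sum_sum, dotProduct, dotProduct, Finset.sum_mul_sum]
  calc ∑ a, ∑ b, z a * W a b * z b
      = (∑ a, ∑ b, z a * x a * (z b * y b) + ∑ a, ∑ b, z a * y a * (z b * x b)) / 2 := by
        simp only [hW, ← Finset.sum_add_distrib, Finset.sum_div]
        congr! 2; ring
    _ = ∑ a, ∑ b, z a * x a * (z b * y b) := by rw [hsymm, add_self_div_two]

theorem exists_dotProduct_neg_pos {ι K : Type*} [Fintype ι] [Field K] [LinearOrder K]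
    [IsStrictOrderedRing K] {x y : ι → K} (hne : x ≠ y) (hsum : ∑ i, x i = ∑ i, y i)
    (hs : ∑ i, x i ≠ 0) : ∃ z, z ⬝ᵥ x < 0 ∧ 0 < z ⬝ᵥ y := by
  set d := y - x
  have hgap : d ⬝ᵥ x < d ⬝ᵥ y := by
    have hd : 0 < d ⬝ᵥ d := lt_of_le_of_ne (Finset.sum_nonneg fun i _ => mul_self_nonneg (d i))
      (Ne.symm (dotProduct_self_eq_zero.not.mpr (sub_ne_zero.mpr hne.symm)))
    rwa [dotProduct_sub, sub_pos] at hd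
  set t := (d ⬝ᵥ x + d ⬝ᵥ y) / (2 * ∑ i, x i)
  have hts : t * ∑ i, x i = (d ⬝ᵥ x + d ⬝ᵥ y) / 2 := by
    simp only [t]; field_simp
  refine ⟨d - t • 1, ?_, ?_⟩
  · rw [sub_dotProduct, smul_dotProduct, one_dotProduct, smul_eq_mul, hts]
    linarith
  · rw [sub_dotProduct, smul_dotProduct, one_dotProduct, smul_eq_mul, ← hsum, hts]
    linarith

theorem stmt5 {m : ℕ} (x y : Fin m → ℝ)
    (hx : IsProbVec x) (hy : IsProbVec y) (hne : x ≠ y)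
    (W : Matrix (Fin m) (Fin m) ℝ)
    (hW : ∀ a b, W a b = (x a * y b + y a * x b) / 2) :
    ¬ W.PosSemidef ∧ ∃ z : Fin m → ℝ, ∑ a, ∑ b, z a * W a b * z b < 0 := by
  obtain ⟨z, hzx, hzy⟩ :=
    exists_dotProduct_neg_pos hne (hx.2.trans hy.2.symm) (by rw [hx.2]; exact one_ne_zero)
  have hneg : ∑ a, ∑ b, z a * W a b * z b < 0 := by
    rw [← dotProduct_mulVec_eq_sum_sum, dotProduct_mulVec_eq_mul_of_symmetrized_outer hW]
    exact mul_neg_of_neg_of_pos hzx hzy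
  refine ⟨fun hpsd => ?_, z, hneg⟩
  have hnonneg := hpsd.dotProduct_mulVec_nonneg z
  rw [star_trivial, dotProduct_mulVec_eq_sum_sum] at hnonneg
  exact hneg.not_ge hnonneg
end

section
/- Let Γ be a symmetric 2×2 bimatrix game with row payoff matrix A = [[x,y],[z,w]]. Every extreme point of the set of exchangeable equilibria of Γ is a symmetric Nash equilibrium, i.e., has the form v vᵀ for a probability vector v satisfying the Nash conditions. Consequently, the set of exchangeable equilibria equals the convex hull of the symmetric Nash equilibria. -/
def IsCorrEq {m : ℕ} (A : Matrix (Fin m) (Fin m) ℝ) (P : Matrix (Fin m) (Fin m) ℝ) : Prop :=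
  (∀ a b, 0 ≤ P a b) ∧ (∑ a, ∑ b, P a b = 1) ∧
    (∀ s t, ∑ j, (A t j - A s j) * P s j ≤ 0) ∧
    (∀ s t, ∑ i, (A t i - A s i) * P i s ≤ 0)

/-- Symmetric Nash equilibrium: a probability vector that is a best response to itself. -/
def IsSymNash {m : ℕ} (A : Matrix (Fin m) (Fin m) ℝ) (v : Fin m → ℝ) : Prop :=
  IsProbVec v ∧ ∀ t, ∑ j, A t j * v j ≤ ∑ i, ∑ j, v i * A i j * v j

/-!
Write an exchangeable equilibrium as `W = !![p, q; q, r]`; being conditionally i.i.d. gives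
`q² ≤ pr`, and the incentive constraints read `(w - y) q ≤ (x - z) p`, `(x - z) q ≤ (w - y) r`.
If `q² = pr` then `W = v vᵀ` with `v = (p + q, q + r)`, and for a product `v vᵀ` the incentive
constraints are exactly the Nash conditions on `v`. If `q² < pr`, the constraints force both gains
`x - z` and `w - y` to be nonnegative. When both vanish every strategy is a Nash equilibrium, and
the conditionally i.i.d. decomposition of `W` is already a mixture of Nash products. Otherwise `W`
is a mixture of the pure equilibria and the completely mixed one. Finally, the extreme points of
a convex hull lie in the generating set.
-/

open Matrix Finset

section General

variable {m : ℕ}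

def exchEquilibria (A : Matrix (Fin m) (Fin m) ℝ) : Set (Matrix (Fin m) (Fin m) ℝ) :=
  {W | IsCorrEq A W ∧ IsCondIID W}

def symNashProducts (A : Matrix (Fin m) (Fin m) ℝ) : Set (Matrix (Fin m) (Fin m) ℝ) :=
  {W | ∃ v : Fin m → ℝ, IsSymNash A v ∧ ∀ a b, W a b = v a * v b}

def probProducts (m : ℕ) : Set (Matrix (Fin m) (Fin m) ℝ) :=
  {W | ∃ v : Fin m → ℝ, IsProbVec v ∧ ∀ a b, W a b = v a * v b}

lemma sum_sum_mul_mul_eq_dotProduct_mulVec (A : Matrix (Fin m) (Fin m) ℝ) (v : Fin m → ℝ) :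
    ∑ i, ∑ j, v i * A i j * v j = v ⬝ᵥ (A *ᵥ v) := by
  simp only [dotProduct, mulVec, mul_sum, mul_assoc]

lemma isSymNash_iff_forall_mul_sub_nonpos {A : Matrix (Fin m) (Fin m) ℝ} {v : Fin m → ℝ}
    (hv : IsProbVec v) :
    IsSymNash A v ↔ ∀ s t, v s * ((A *ᵥ v) t - (A *ᵥ v) s) ≤ 0 := by
  obtain ⟨hv0, hv1⟩ := hv
  have hsum : ∀ c : ℝ, ∑ s, v s * c = c := fun c => by rw [← sum_mul, hv1, one_mul]
  change (_ ∧ ∀ t, (A *ᵥ v) t ≤ _) ↔ _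
  rw [sum_sum_mul_mul_eq_dotProduct_mulVec]
  refine ⟨fun ⟨_, hbest⟩ s t => ?_, fun h => ⟨⟨hv0, hv1⟩, fun t => ?_⟩⟩
  · -- the payoff `v ⬝ᵥ A *ᵥ v` is an average of the `(A *ᵥ v) s`, none of which exceeds it
    have hterm : ∀ s ∈ univ, 0 ≤ v s * (v ⬝ᵥ (A *ᵥ v) - (A *ᵥ v) s) :=
      fun s _ => mul_nonneg (hv0 s) (sub_nonneg.2 (hbest s))
    have htotal : ∑ s, v s * (v ⬝ᵥ (A *ᵥ v) - (A *ᵥ v) s) = 0 := by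
      simp only [mul_sub, sum_sub_distrib, hsum, dotProduct, sub_self]
    have hs := (sum_eq_zero_iff_of_nonneg hterm).1 htotal s (mem_univ s)
    nlinarith [mul_le_mul_of_nonneg_left (hbest t) (hv0 s)]
  · have := sum_nonpos fun s (_ : s ∈ univ) => h s t
    rw [← sub_nonpos, dotProduct, ← hsum ((A *ᵥ v) t), ← sum_sub_distrib]
    simpa only [mul_sub] using this

lemma isCorrEq_iff_isSymNash_of_apply_eq_mul {A W : Matrix (Fin m) (Fin m) ℝ} {v : Fin m → ℝ}
    (hv : IsProbVec v) (hW : ∀ a b, W a b = v a * v b) : IsCorrEq A W ↔ IsSymNash A v := by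
  have hrow : ∀ s t, ∑ j, (A t j - A s j) * W s j = v s * ((A *ᵥ v) t - (A *ᵥ v) s) := by
    intro s t
    simp only [hW, mulVec, dotProduct, mul_sub, sub_mul, sum_sub_distrib, mul_sum]
    congr 1 <;> exact sum_congr rfl fun j _ => by ring
  have hcol : ∀ s t, ∑ i, (A t i - A s i) * W i s = v s * ((A *ᵥ v) t - (A *ᵥ v) s) := by
    intro s t
    rw [← hrow]
    exact sum_congr rfl fun i _ => by rw [hW, hW, mul_comm (v i)]
  have hnonneg : ∀ a b, 0 ≤ W a b := fun a b => (hW a b).symm ▸ mul_nonneg (hv.1 a) (hv.1 b)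
  have htotal : ∑ a, ∑ b, W a b = 1 := by simp only [hW, ← mul_sum, ← sum_mul, hv.2, one_mul]
  simp only [IsCorrEq, hrow, hcol, and_self, isSymNash_iff_forall_mul_sub_nonpos hv,
    hnonneg, htotal, implies_true, true_and]

lemma isCondIID_iff_mem_convexHull {W : Matrix (Fin m) (Fin m) ℝ} :
    IsCondIID W ↔ W ∈ convexHull ℝ (probProducts m) := by
  constructor
  · rintro ⟨k, lam, u, hlam0, hlam1, hu, hW⟩
    refine mem_convexHull_of_exists_fintype lam (fun i => vecMulVec (u i) (u i)) hlam0 hlam1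
      (fun i => ⟨u i, hu i, fun a b => rfl⟩) ?_
    ext a b
    simp [hW, Matrix.sum_apply, vecMulVec_apply]
  · rw [mem_convexHull_iff_exists_fintype]
    rintro ⟨ι, _, lam, M, hlam0, hlam1, hM, rfl⟩
    choose u hu hMu using hM
    let e := Fintype.equivFin ι
    refine ⟨Fintype.card ι, lam ∘ e.symm, u ∘ e.symm, fun i => hlam0 _, ?_, fun i => hu _, ?_⟩
    · rwa [Function.comp_def, e.symm.sum_comp lam]
    · intro a b
      simp only [Matrix.sum_apply, Matrix.smul_apply, smul_eq_mul, hMu, Function.comp_apply]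
      exact (e.symm.sum_comp fun i => lam i * (u i a * u i b)).symm

lemma IsCondIID.apply_comm {W : Matrix (Fin m) (Fin m) ℝ} (h : IsCondIID W) (a b : Fin m) :
    W b a = W a b := by
  obtain ⟨k, lam, u, -, -, -, hW⟩ := h
  simp only [hW, mul_comm (u _ b)]

lemma IsCondIID.sq_le_mul_diag {W : Matrix (Fin m) (Fin m) ℝ} (h : IsCondIID W) (a b : Fin m) :
    W a b ^ 2 ≤ W a a * W b b := by
  obtain ⟨k, lam, u, hlam0, -, -, hW⟩ := h
  simp only [hW]
  exact sum_sq_le_sum_mul_sum_of_sq_le_mul _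
    (fun i _ => mul_nonneg (hlam0 i) (mul_self_nonneg _))
    (fun i _ => mul_nonneg (hlam0 i) (mul_self_nonneg _)) (fun i _ => le_of_eq (by ring))

lemma convex_isCorrEq (A : Matrix (Fin m) (Fin m) ℝ) : Convex ℝ {P | IsCorrEq A P} := by
  rintro P ⟨hP0, hP1, hProw, hPcol⟩ Q ⟨hQ0, hQ1, hQrow, hQcol⟩ α β hα hβ hαβ
  simp only [Set.mem_ofPred_eq, IsCorrEq, Matrix.add_apply, Matrix.smul_apply, smul_eq_mul,
    mul_add, sum_add_distrib, mul_left_comm _ α, mul_left_comm _ β, ← mul_sum, hP1, hQ1]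
  refine ⟨fun a b => ?_, by linarith, fun s t => ?_, fun s t => ?_⟩
  · exact add_nonneg (mul_nonneg hα (hP0 a b)) (mul_nonneg hβ (hQ0 a b))
  · linarith [mul_nonpos_of_nonneg_of_nonpos hα (hProw s t),
      mul_nonpos_of_nonneg_of_nonpos hβ (hQrow s t)]
  · linarith [mul_nonpos_of_nonneg_of_nonpos hα (hPcol s t),
      mul_nonpos_of_nonneg_of_nonpos hβ (hQcol s t)]

variable (A : Matrix (Fin m) (Fin m) ℝ)

lemma convex_exchEquilibria : Convex ℝ (exchEquilibria A) := by
  have hIID : {W : Matrix (Fin m) (Fin m) ℝ | IsCondIID W} = convexHull ℝ (probProducts m) :=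
    Set.ext fun _ => isCondIID_iff_mem_convexHull
  exact (convex_isCorrEq A).inter (hIID ▸ convex_convexHull ℝ _ : Convex ℝ {W | IsCondIID W})

lemma symNashProducts_subset_exchEquilibria : symNashProducts A ⊆ exchEquilibria A :=
  fun _ ⟨v, hv, hW⟩ => ⟨(isCorrEq_iff_isSymNash_of_apply_eq_mul hv.1 hW).2 hv,
    isCondIID_iff_mem_convexHull.2 (subset_convexHull ℝ _ ⟨v, hv.1, hW⟩)⟩

lemma convexHull_symNashProducts_subset : convexHull ℝ (symNashProducts A) ⊆ exchEquilibria A :=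
  convexHull_min (symNashProducts_subset_exchEquilibria A) (convex_exchEquilibria A)

variable {A}

lemma vecMulVec_mem_symNashProducts {v : Fin m → ℝ} (hv : IsSymNash A v) :
    vecMulVec v v ∈ symNashProducts A :=
  ⟨v, hv, fun _ _ => rfl⟩

lemma mem_symNashProducts_of_apply_eq_mul {W : Matrix (Fin m) (Fin m) ℝ} {v : Fin m → ℝ}
    (hW : W ∈ exchEquilibria A) (hv : IsProbVec v) (hWv : ∀ a b, W a b = v a * v b) :
    W ∈ symNashProducts A :=
  ⟨v, (isCorrEq_iff_isSymNash_of_apply_eq_mul hv hWv).1 hW.1, hWv⟩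

lemma exchEquilibria_subset_convexHull_of_forall_isSymNash
    (hA : ∀ v, IsProbVec v → IsSymNash A v) :
    exchEquilibria A ⊆ convexHull ℝ (symNashProducts A) := fun _ hW =>
  have hsub : probProducts m ⊆ symNashProducts A := fun _ ⟨v, hv, hWv⟩ => ⟨v, hA v hv, hWv⟩
  convexHull_mono hsub (isCondIID_iff_mem_convexHull.1 hW.2)

end General

lemma Convex.smul_add_smul_add_smul_mem {E : Type*} [AddCommGroup E] [Module ℝ E] {s : Set E}
    (hs : Convex ℝ s) {u v w : E} (hu : u ∈ s) (hv : v ∈ s) (hw : w ∈ s) {a b c : ℝ}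
    (ha : 0 ≤ a) (hb : 0 ≤ b) (hc : 0 ≤ c) (habc : a + b + c = 1) :
    a • u + b • v + c • w ∈ s := by
  have := hs.sum_mem (t := univ) (w := ![a, b, c]) (z := ![u, v, w])
    (by simp [Fin.forall_fin_succ, ha, hb, hc]) (by simp [Fin.sum_univ_three, habc])
    (by simp [Fin.forall_fin_succ, hu, hv, hw])
  simpa [Fin.sum_univ_three, add_assoc] using this

lemma isProbVec_two {a b : ℝ} (ha : 0 ≤ a) (hb : 0 ≤ b) (hab : a + b = 1) : IsProbVec ![a, b] :=
  ⟨by simp [Fin.forall_fin_two, ha, hb], by simp [hab]⟩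

section TwoByTwo

variable {x y z w : ℝ}

lemma isSymNash_two_of {v : Fin 2 → ℝ} (hv : IsProbVec v)
    (h0 : 0 ≤ v 0 * ((x - z) * v 0 - (w - y) * v 1))
    (h1 : v 1 * ((x - z) * v 0 - (w - y) * v 1) ≤ 0) : IsSymNash !![x, y; z, w] v := by
  rw [isSymNash_iff_forall_mul_sub_nonpos hv]
  intro s t
  fin_cases s <;> fin_cases t <;> simp [mulVec, dotProduct, Fin.sum_univ_two] <;> linarith

lemma isSymNash_pure_zero (h : z ≤ x) : IsSymNash !![x, y; z, w] ![1, 0] :=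
  isSymNash_two_of (isProbVec_two zero_le_one le_rfl (add_zero 1)) (by simpa using h) (by simp)

lemma isSymNash_pure_one (h : y ≤ w) : IsSymNash !![x, y; z, w] ![0, 1] :=
  isSymNash_two_of (isProbVec_two le_rfl zero_le_one (zero_add 1)) (by simp) (by simpa using h)

lemma isSymNash_mixed (hb : 0 < x - z) (hc : 0 < w - y) :
    IsSymNash !![x, y; z, w] ![(w - y) / (x - z + (w - y)), (x - z) / (x - z + (w - y))] := by
  have hbc : 0 < x - z + (w - y) := add_pos hb hc
  -- both pure strategies earn the same payoff against this mix
  have hindiff :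
      (x - z) * ((w - y) / (x - z + (w - y))) - (w - y) * ((x - z) / (x - z + (w - y))) = 0 := by
    field_simp; ring
  refine isSymNash_two_of (isProbVec_two (by positivity) (by positivity) ?_) ?_ ?_
  · field_simp; ring
  · simp [hindiff]
  · simp [hindiff]

lemma diagonal_mem_convexHull_symNashProducts {p r : ℝ} (hp : 0 < p) (hr : 0 < r)
    (hpr : p + r = 1) (hb : z ≤ x) (hc : y ≤ w) :
    !![p, 0; 0, r] ∈ convexHull ℝ (symNashProducts !![x, y; z, w]) := by
  have hdecomp :
      !![p, 0; 0, r] = p • vecMulVec ![1, 0] ![1, 0] + r • vecMulVec ![0, 1] ![0, 1] := by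
    ext i j; fin_cases i <;> fin_cases j <;> simp
  rw [hdecomp]
  exact convex_convexHull ℝ _
    (subset_convexHull ℝ _ (vecMulVec_mem_symNashProducts (isSymNash_pure_zero hb)))
    (subset_convexHull ℝ _ (vecMulVec_mem_symNashProducts (isSymNash_pure_one hc))) hp.le hr.le hpr

/-- The mixed equilibrium carries all of the off-diagonal mass `q`; the pure ones absorb the rest
of the diagonal. -/
lemma mem_convexHull_symNashProducts_of_pos {p q r : ℝ} (hb : 0 < x - z) (hc : 0 < w - y)
    (hq : 0 ≤ q) (hrow0 : (w - y) * q ≤ (x - z) * p) (hrow1 : (x - z) * q ≤ (w - y) * r)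
    (hsum : p + 2 * q + r = 1) :
    !![p, q; q, r] ∈ convexHull ℝ (symNashProducts !![x, y; z, w]) := by
  set b := x - z
  set c := w - y
  have hdecomp : !![p, q; q, r] = ((b * p - c * q) / b) • vecMulVec ![1, 0] ![1, 0]
      + ((c * r - b * q) / c) • vecMulVec ![0, 1] ![0, 1]
      + (q * (b + c) ^ 2 / (b * c))
        • vecMulVec ![c / (b + c), b / (b + c)] ![c / (b + c), b / (b + c)] := by
    ext i j; fin_cases i <;> fin_cases j <;> simp <;> field_simp <;> ring
  rw [hdecomp]
  refine (convex_convexHull ℝ _).smul_add_smul_add_smul_mem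
    (subset_convexHull ℝ _ (vecMulVec_mem_symNashProducts (isSymNash_pure_zero (by linarith))))
    (subset_convexHull ℝ _ (vecMulVec_mem_symNashProducts (isSymNash_pure_one (by linarith))))
    (subset_convexHull ℝ _ (vecMulVec_mem_symNashProducts (isSymNash_mixed hb hc)))
    (div_nonneg (by linarith) hb.le) (div_nonneg (by linarith) hc.le) (by positivity) ?_
  field_simp
  linear_combination (b * c) * hsum

lemma exchEquilibria_two_subset_convexHull :
    exchEquilibria !![x, y; z, w] ⊆ convexHull ℝ (symNashProducts !![x, y; z, w]) := by
  intro W hW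
  by_cases hbc : x = z ∧ w = y
  · obtain ⟨rfl, rfl⟩ := hbc
    exact exchEquilibria_subset_convexHull_of_forall_isSymNash
      (fun v hv => isSymNash_two_of hv (by simp) (by simp)) hW
  have hI := hW.2
  obtain ⟨hnonneg, htotal, hrow, -⟩ := hW.1
  set p := W 0 0
  set q := W 0 1
  set r := W 1 1
  have hsym : W 1 0 = q := hI.apply_comm 0 1
  have hWpqr : W = !![p, q; q, r] := (eta_fin_two W).trans (by rw [hsym])
  have hsum : p + 2 * q + r = 1 := by
    simp only [Fin.sum_univ_two, hsym] at htotal; linarith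
  have hrow0 : (w - y) * q ≤ (x - z) * p := by
    have := hrow 0 1; simp [Fin.sum_univ_two] at this; linarith
  have hrow1 : (x - z) * q ≤ (w - y) * r := by
    have := hrow 1 0; simp [Fin.sum_univ_two, hsym] at this; linarith
  have hp : 0 ≤ p := hnonneg 0 0
  have hq : 0 ≤ q := hnonneg 0 1
  have hr : 0 ≤ r := hnonneg 1 1
  have hpsd : q ^ 2 ≤ p * r := hI.sq_le_mul_diag 0 1
  clear_value p q r
  subst hWpqr
  rcases hpsd.eq_or_lt with hrank | hrank
  · -- `W = v vᵀ` for `v = (p + q, q + r)`, since `(p + q)² = p (p + 2q + r)` once `q² = pr`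
    apply subset_convexHull
    refine mem_symNashProducts_of_apply_eq_mul hW
      (isProbVec_two (add_nonneg hp hq) (add_nonneg hq hr) (by linarith)) fun a b => ?_
    fin_cases a <;> fin_cases b <;> simp <;> nlinarith
  -- `(x - z) (pr - q²)` and `(w - y) (pr - q²)` are nonnegative combinations of the
  -- incentive constraints
  have hb : 0 ≤ x - z := by
    refine nonneg_of_mul_nonneg_left ?_ (sub_pos.2 hrank)
    nlinarith [mul_le_mul_of_nonneg_left hrow0 hr, mul_le_mul_of_nonneg_left hrow1 hq]
  have hc : 0 ≤ w - y := by
    refine nonneg_of_mul_nonneg_left ?_ (sub_pos.2 hrank)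
    nlinarith [mul_le_mul_of_nonneg_left hrow0 hq, mul_le_mul_of_nonneg_left hrow1 hp]
  rcases hq.eq_or_lt with rfl | hqpos
  · refine diagonal_mem_convexHull_symNashProducts (hp.lt_of_ne ?_) (hr.lt_of_ne ?_)
      (by linarith) (by linarith) (by linarith) <;> rintro rfl <;> simp at hrank
  -- since `q > 0`, `hrow0` turns `x = z` into `w ≤ y`, and `hrow1` turns `w = y` into `x ≤ z`
  have hb' : 0 < x - z := hb.lt_of_ne fun h => hbc ⟨by linarith, by nlinarith⟩
  have hc' : 0 < w - y := hc.lt_of_ne fun h => hbc ⟨by nlinarith, by linarith⟩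
  exact mem_convexHull_symNashProducts_of_pos hb' hc' hq hrow0 hrow1 hsum

end TwoByTwo

theorem stmt9 (x y z w : ℝ) (A : Matrix (Fin 2) (Fin 2) ℝ) (hA : A = !![x, y; z, w]) :
    (∀ W ∈ Set.extremePoints ℝ {W : Matrix (Fin 2) (Fin 2) ℝ | IsCorrEq A W ∧ IsCondIID W},
      ∃ v : Fin 2 → ℝ, IsSymNash A v ∧ ∀ a b, W a b = v a * v b) ∧
    {W : Matrix (Fin 2) (Fin 2) ℝ | IsCorrEq A W ∧ IsCondIID W} =
      convexHull ℝ {W : Matrix (Fin 2) (Fin 2) ℝ |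
        ∃ v : Fin 2 → ℝ, IsSymNash A v ∧ ∀ a b, W a b = v a * v b} := by
  subst hA
  have heq : exchEquilibria !![x, y; z, w] = convexHull ℝ (symNashProducts !![x, y; z, w]) :=
    exchEquilibria_two_subset_convexHull.antisymm (convexHull_symNashProducts_subset _)
  refine ⟨fun W hW => ?_, heq⟩
  change W ∈ Set.extremePoints ℝ (exchEquilibria _) at hW
  rw [heq] at hW
  exact (extremePoints_convexHull_subset hW : W ∈ symNashProducts _)
end

section
/- Let Γ be a symmetric bimatrix game with m strategies and row payoff matrix A. Every convex combination of symmetric Nash equilibria (viewed as matrices v vᵀ) is an exchangeable equilibrium, and every exchangeable equilibrium is a symmetric correlated equilibrium. That is, conv(Nash_sym) ⊆ XE_sym ⊆ CE_sym. -/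
/-!
A symmetric Nash equilibrium `v` earns the equilibrium payoff `vᵀAv` on every pure strategy in its
support, so `v s * ((Av)_t - (Av)_s) ≤ 0` for all `s, t`; these are exactly the correlated
equilibrium constraints of `v vᵀ`. Both the correlated equilibrium constraints and the mixtures of
product distributions are preserved under convex combinations, which gives the first inclusion.
A mixture of products `∑ λᵢ wᵢ wᵢᵀ` is a symmetric matrix, which gives the second.
-/

open Finset

namespace IsSymNash

variable {m : ℕ} {A : Matrix (Fin m) (Fin m) ℝ} {v : Fin m → ℝ}

lemma mul_payoff_eq (hv : IsSymNash A v) (s : Fin m) :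
    v s * ∑ j, A s j * v j = v s * ∑ i, ∑ j, v i * A i j * v j := by
  set V := ∑ i, ∑ j, v i * A i j * v j
  have hgap_nonneg : ∀ i ∈ univ, 0 ≤ v i * (V - ∑ j, A i j * v j) :=
    fun i _ => mul_nonneg (hv.1.1 i) (sub_nonneg.2 (hv.2 i))
  have hgap_sum : ∑ i, v i * (V - ∑ j, A i j * v j) = 0 := by
    rw [sum_congr rfl fun i _ => mul_sub (v i) V _, sum_sub_distrib, ← sum_mul, hv.1.2, one_mul,
      sub_eq_zero]
    simp only [V, mul_sum, mul_assoc]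
  have hgap_s := (sum_eq_zero_iff_of_nonneg hgap_nonneg).1 hgap_sum s (mem_univ s)
  linarith [mul_sub (v s) V (∑ j, A s j * v j)]

lemma mul_deviation_nonpos (hv : IsSymNash A v) (s t : Fin m) :
    v s * (∑ j, A t j * v j - ∑ j, A s j * v j) ≤ 0 := by
  rw [mul_sub, hv.mul_payoff_eq s, ← mul_sub]
  exact mul_nonpos_of_nonneg_of_nonpos (hv.1.1 s) (sub_nonpos.2 (hv.2 t))

lemma isCorrEq {W : Matrix (Fin m) (Fin m) ℝ} (hv : IsSymNash A v)
    (hW : ∀ a b, W a b = v a * v b) : IsCorrEq A W := by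
  have hdev : ∀ s t, ∑ j, (A t j - A s j) * (v s * v j) =
      v s * (∑ j, A t j * v j - ∑ j, A s j * v j) := fun s t => by
    rw [← sum_sub_distrib, mul_sum]
    exact sum_congr rfl fun j _ => by ring
  refine ⟨fun a b => ?_, ?_, fun s t => ?_, fun s t => ?_⟩
  · rw [hW]; exact mul_nonneg (hv.1.1 a) (hv.1.1 b)
  · simp only [hW, ← mul_sum, ← sum_mul, hv.1.2, one_mul]
  · simpa only [hW, hdev] using hv.mul_deviation_nonpos s t
  · simpa only [hW, mul_comm _ (v s), hdev] using hv.mul_deviation_nonpos s t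

end IsSymNash

lemma isCondIID_of_eq_mul {m : ℕ} {v : Fin m → ℝ} {W : Matrix (Fin m) (Fin m) ℝ}
    (hv : IsProbVec v) (hW : ∀ a b, W a b = v a * v b) : IsCondIID W :=
  ⟨1, fun _ => 1, fun _ => v, fun _ => zero_le_one, by simp, fun _ => hv, by simp [hW]⟩

lemma IsCondIID.isSymm {m : ℕ} {W : Matrix (Fin m) (Fin m) ℝ} (hW : IsCondIID W) :
    W.IsSymm := by
  obtain ⟨k, lam, w, -, -, -, hW⟩ := hW
  ext a b
  simp only [Matrix.transpose_apply, hW, mul_comm (w _ a)]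

lemma convex_setOf_isCorrEq {m : ℕ} (A : Matrix (Fin m) (Fin m) ℝ) :
    Convex ℝ {P : Matrix (Fin m) (Fin m) ℝ | IsCorrEq A P} := by
  rintro P ⟨hP₀, hP₁, hProw, hPcol⟩ Q ⟨hQ₀, hQ₁, hQrow, hQcol⟩ a b ha hb hab
  have hmix : ∀ c p q : Fin m → ℝ, ∑ j, c j * (a * p j + b * q j) =
      a * ∑ j, c j * p j + b * ∑ j, c j * q j := fun c p q => by
    simp only [mul_sum, ← sum_add_distrib]
    exact sum_congr rfl fun j _ => by ring
  simp only [Set.mem_ofPred_eq, IsCorrEq, Matrix.add_apply, Matrix.smul_apply, smul_eq_mul, hmix]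
  refine ⟨fun x y => ?_, ?_, fun s t => ?_, fun s t => ?_⟩
  · exact add_nonneg (mul_nonneg ha (hP₀ x y)) (mul_nonneg hb (hQ₀ x y))
  · simp only [sum_add_distrib, ← mul_sum, hP₁, hQ₁, mul_one, hab]
  · exact add_nonpos (mul_nonpos_of_nonneg_of_nonpos ha (hProw s t))
      (mul_nonpos_of_nonneg_of_nonpos hb (hQrow s t))
  · exact add_nonpos (mul_nonpos_of_nonneg_of_nonpos ha (hPcol s t))
      (mul_nonpos_of_nonneg_of_nonpos hb (hQcol s t))

lemma convex_setOf_isCondIID {m : ℕ} :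
    Convex ℝ {W : Matrix (Fin m) (Fin m) ℝ | IsCondIID W} := by
  rintro P ⟨k, lam, w, hlam₀, hlam₁, hw, hP⟩ Q ⟨k', lam', w', hlam₀', hlam₁', hw', hQ⟩ a b ha hb hab
  refine ⟨k + k', Fin.addCases (fun i => a * lam i) (fun i => b * lam' i), Fin.addCases w w',
    (Fin.forall_fin_add _).2 ⟨fun i => ?_, fun i => ?_⟩, ?_,
    (Fin.forall_fin_add _).2 ⟨fun i => ?_, fun i => ?_⟩, fun x y => ?_⟩
  · simpa only [Fin.addCases_left] using mul_nonneg ha (hlam₀ i)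
  · simpa only [Fin.addCases_right] using mul_nonneg hb (hlam₀' i)
  · simp only [Fin.sum_univ_add, Fin.addCases_left, Fin.addCases_right, ← mul_sum, hlam₁, hlam₁',
      mul_one, hab]
  · simpa only [Fin.addCases_left] using hw i
  · simpa only [Fin.addCases_right] using hw' i
  · simp only [Matrix.add_apply, Matrix.smul_apply, smul_eq_mul, hP, hQ, Fin.sum_univ_add,
      Fin.addCases_left, Fin.addCases_right, mul_sum, mul_assoc]

theorem stmt10 {m : ℕ} (A : Matrix (Fin m) (Fin m) ℝ) :
    convexHull ℝ {W : Matrix (Fin m) (Fin m) ℝ |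
        ∃ v : Fin m → ℝ, IsSymNash A v ∧ ∀ a b, W a b = v a * v b} ⊆
      {W : Matrix (Fin m) (Fin m) ℝ | IsCorrEq A W ∧ IsCondIID W} ∧
    {W : Matrix (Fin m) (Fin m) ℝ | IsCorrEq A W ∧ IsCondIID W} ⊆
      {W : Matrix (Fin m) (Fin m) ℝ | IsCorrEq A W ∧ W.IsSymm} := by
  refine ⟨convexHull_min ?_ ((convex_setOf_isCorrEq A).inter convex_setOf_isCondIID), ?_⟩
  · rintro W ⟨v, hv, hW⟩
    exact ⟨hv.isCorrEq hW, isCondIID_of_eq_mul hv.1 hW⟩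
  · rintro W ⟨hce, hW⟩
    exact ⟨hce, hW.isSymm⟩
end

section
/- For the symmetric game with row payoff matrix A = [[0,1,1],[2,1,0],[1,0,1]], the matrix W² = (5/7)·u uᵀ + (2/7)·v vᵀ with u = (1/8, 7/8, 0)ᵀ and v = (1/8, 0, 7/8)ᵀ equals (1/64)·[[1,5,2],[5,35,0],[2,0,14]], is a correlated equilibrium of the game, and gives each player expected utility 17/16; in particular there is an exchangeable equilibrium with expected utility strictly greater than that of every symmetric Nash equilibrium (which is at most 1). -/
open Finset Matrix

theorem IsSymNash.row_payoff_eq_of_pos {m : ℕ} {A : Matrix (Fin m) (Fin m) ℝ}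
    {x : Fin m → ℝ} (hx : IsSymNash A x) {t : Fin m} (ht : 0 < x t) :
    ∑ j, A t j * x j = ∑ i, ∑ j, x i * A i j * x j := by
  obtain ⟨⟨hnonneg, hsum⟩, hbest⟩ := hx
  set u := ∑ i, ∑ j, x i * A i j * x j
  have hle : ∀ i ∈ univ, x i * ∑ j, A i j * x j ≤ x i * u := fun i _ =>
    mul_le_mul_of_nonneg_left (hbest i) (hnonneg i)
  have hsum_eq : ∑ i, x i * ∑ j, A i j * x j = ∑ i, x i * u := by
    rw [← sum_mul, hsum, one_mul]
    simp only [u, mul_sum, mul_assoc]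
  exact mul_left_cancel₀ ht.ne' ((sum_eq_sum_iff_of_le hle).1 hsum_eq t (mem_univ t))

theorem isProbVec_three {a b c : ℝ} (ha : 0 ≤ a) (hb : 0 ≤ b) (hc : 0 ≤ c)
    (hsum : a + b + c = 1) : IsProbVec ![a, b, c] :=
  ⟨fun i => by fin_cases i <;> assumption, by simpa [Fin.sum_univ_three] using hsum⟩

theorem isCondIID_of_convexComb_two {m : ℕ} {W : Matrix (Fin m) (Fin m) ℝ} {u v : Fin m → ℝ}
    {p q : ℝ} (hW : ∀ a b, W a b = p * (u a * u b) + q * (v a * v b))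
    (hu : IsProbVec u) (hv : IsProbVec v) (hp : 0 ≤ p) (hq : 0 ≤ q) (hpq : p + q = 1) :
    IsCondIID W := by
  refine ⟨2, ![p, q], ![u, v], fun i => ?_, by simpa using hpq, fun i => ?_,
    fun a b => by simp [hW]⟩
  · fin_cases i <;> assumption
  · fin_cases i <;> assumption

theorem isCorrEq_of_isSymm {m : ℕ} {A P : Matrix (Fin m) (Fin m) ℝ} (hP : P.IsSymm)
    (hnonneg : ∀ a b, 0 ≤ P a b) (hsum : ∑ a, ∑ b, P a b = 1)
    (hrow : ∀ s t, ∑ j, (A t j - A s j) * P s j ≤ 0) :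
    IsCorrEq A P :=
  ⟨hnonneg, hsum, hrow, fun s t => by simpa only [hP.apply] using hrow s t⟩

theorem symNash_value_le_one {x : Fin 3 → ℝ} (hx : IsSymNash !![0, 1, 1; 2, 1, 0; 1, 0, 1] x) :
    ∑ i, ∑ j, x i * !![(0 : ℝ), 1, 1; 2, 1, 0; 1, 0, 1] i j * x j ≤ 1 := by
  obtain ⟨hnonneg, hsum⟩ := hx.1
  have h0 := hnonneg 0; have h1 := hnonneg 1; have h2 := hnonneg 2
  simp only [Fin.sum_univ_three] at hsum
  rcases h0.eq_or_lt with hx0 | hx0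
  · have hvalue : ∑ i, ∑ j, x i * !![(0 : ℝ), 1, 1; 2, 1, 0; 1, 0, 1] i j * x j =
        x 1 ^ 2 + x 2 ^ 2 := by
      simp [Fin.sum_univ_three, ← hx0]
      ring
    nlinarith
  · rw [← hx.row_payoff_eq_of_pos hx0]
    simp [Fin.sum_univ_three]
    linarith

theorem stmt18 (A W₂ : Matrix (Fin 3) (Fin 3) ℝ)
    (hA : A = !![0, 1, 1; 2, 1, 0; 1, 0, 1])
    (hW : ∀ a b, W₂ a b =
      (5 / 7) * (![1/8, 7/8, 0] a * ![1/8, 7/8, 0] b) +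
        (2 / 7) * (![1/8, 0, 7/8] a * ![1/8, 0, 7/8] b)) :
    W₂ = (1 / 64 : ℝ) • !![1, 5, 2; 5, 35, 0; 2, 0, 14] ∧
      IsCorrEq A W₂ ∧ IsCondIID W₂ ∧
      (∑ i, ∑ j, A i j * W₂ i j) = 17 / 16 ∧
      (∀ x : Fin 3 → ℝ, IsSymNash A x →
        ∑ i, ∑ j, x i * A i j * x j ≤ 1 ∧
          ∑ i, ∑ j, x i * A i j * x j < ∑ i, ∑ j, A i j * W₂ i j) := by
  have hW₂ : W₂ = (1 / 64 : ℝ) • !![1, 5, 2; 5, 35, 0; 2, 0, 14] := by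
    ext a b
    fin_cases a <;> fin_cases b <;> norm_num [hW]
  have hiid : IsCondIID W₂ :=
    isCondIID_of_convexComb_two hW
      (isProbVec_three (by norm_num) (by norm_num) (by norm_num) (by norm_num))
      (isProbVec_three (by norm_num) (by norm_num) (by norm_num) (by norm_num))
      (by norm_num) (by norm_num) (by norm_num)
  subst hA hW₂
  have hutility : ∑ i, ∑ j, !![(0 : ℝ), 1, 1; 2, 1, 0; 1, 0, 1] i j *
      ((1 / 64 : ℝ) • !![(1 : ℝ), 5, 2; 5, 35, 0; 2, 0, 14]) i j = 17 / 16 := by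
    norm_num [Fin.sum_univ_three, cons_val_two, tail_cons, head_cons]
  have hcorr : IsCorrEq !![0, 1, 1; 2, 1, 0; 1, 0, 1]
      ((1 / 64 : ℝ) • !![(1 : ℝ), 5, 2; 5, 35, 0; 2, 0, 14]) := by
    refine isCorrEq_of_isSymm ?_ (fun a b => ?_) ?_ fun s t => ?_
    · exact (IsSymm.ext fun i j => by fin_cases i <;> fin_cases j <;> rfl).smul _
    · fin_cases a <;> fin_cases b <;> norm_num
    · norm_num [Fin.sum_univ_three, cons_val_two, tail_cons, head_cons]
    · fin_cases s <;> fin_cases t <;>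
        norm_num [Fin.sum_univ_three, cons_val_two, tail_cons, head_cons]
  refine ⟨rfl, hcorr, hiid, hutility, fun x hx => ⟨symNash_value_le_one hx, ?_⟩⟩
  linarith [symNash_value_le_one hx]
end
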